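/- arXiv:1412.4237 — 2 statements merged into one kernel-verified Lean document; each statement's English description precedes it below -/
import Mathlib

section
/- Opial's theorem in ℝ^d: if T : ℝ^d → ℝ^d is nonexpansive, asymptotically regular (T^{r+1}x − T^r x → 0 for all x), and Fix(T) ≠ ∅, then for every x⁰ the Picard sequence x^{r+1} = T x^r converges to a fixed point of T. -/
open Filter Topology Function

/-!
Distances from the Picard iterates to any fixed point are nonincreasing (Fejér monotonicity), so
the orbit is bounded and, by properness, has a convergent subsequence. Asymptotic regularity and
continuity of `T` make its limit `z` a fixed point; then `dist (T^[n] x) z` is nonincreasing and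
tends to `0` along the subsequence, hence along the whole sequence.
-/

section PseudoMetricSpace

variable {X : Type*} [PseudoMetricSpace X]

theorem LipschitzWith.antitone_dist_iterate_isFixedPt {T : X → X} (hT : LipschitzWith 1 T)
    {p : X} (hp : IsFixedPt T p) (x : X) : Antitone fun n => dist (T^[n] x) p :=
  antitone_nat_of_succ_le fun n => by
    simpa [iterate_succ_apply', hp.eq] using hT.dist_le_mul (T^[n] x) p

theorem tendsto_of_antitone_dist_of_tendsto_subseq {u : ℕ → X} {z : X}
    (hanti : Antitone fun n => dist (u n) z) {φ : ℕ → ℕ}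
    (hsub : Tendsto (u ∘ φ) atTop (𝓝 z)) : Tendsto u atTop (𝓝 z) := by
  refine Metric.tendsto_atTop.2 fun ε hε => ?_
  obtain ⟨k, hk⟩ := Metric.tendsto_atTop.1 hsub ε hε
  exact ⟨φ k, fun n hn => (hanti hn).trans_lt (hk k le_rfl)⟩

end PseudoMetricSpace

section MetricSpace

variable {X : Type*} [MetricSpace X]

theorem isFixedPt_of_tendsto_iterate_subseq {T : X → X} (hT : Continuous T) {x z : X}
    (har : Tendsto (fun n => dist (T^[n + 1] x) (T^[n] x)) atTop (𝓝 0))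
    {φ : ℕ → ℕ} (hφ : Tendsto φ atTop atTop) (hz : Tendsto (fun k => T^[φ k] x) atTop (𝓝 z)) :
    IsFixedPt T z := by
  have hTz : Tendsto (fun k => T^[φ k + 1] x) atTop (𝓝 (T z)) := by
    simpa only [iterate_succ_apply', comp_def] using (hT.tendsto z).comp hz
  have hz' : Tendsto (fun k => T^[φ k + 1] x) atTop (𝓝 z) := by
    refine hz.congr_dist ?_
    simpa only [dist_comm, comp_def] using har.comp hφ
  exact tendsto_nhds_unique hTz hz'

theorem LipschitzWith.exists_isFixedPt_tendsto_iterate [ProperSpace X] {T : X → X}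
    (hT : LipschitzWith 1 T) (hfix : ∃ p, IsFixedPt T p) {x : X}
    (har : Tendsto (fun n => dist (T^[n + 1] x) (T^[n] x)) atTop (𝓝 0)) :
    ∃ z, IsFixedPt T z ∧ Tendsto (fun n => T^[n] x) atTop (𝓝 z) := by
  obtain ⟨p, hp⟩ := hfix
  have hbdd : ∀ n, T^[n] x ∈ Metric.closedBall p (dist x p) := fun n =>
    hT.antitone_dist_iterate_isFixedPt hp x (Nat.zero_le n)
  obtain ⟨z, -, φ, hφ, hsub⟩ := tendsto_subseq_of_bounded Metric.isBounded_closedBall hbdd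
  have hz : IsFixedPt T z :=
    isFixedPt_of_tendsto_iterate_subseq hT.continuous har hφ.tendsto_atTop hsub
  exact ⟨z, hz, tendsto_of_antitone_dist_of_tendsto_subseq
    (hT.antitone_dist_iterate_isFixedPt hz x) hsub⟩

end MetricSpace

/-- Opial's convergence theorem in `ℝ^d`: if `T` is nonexpansive,
asymptotically regular and has a fixed point, then every Picard sequence converges to
a fixed point of `T`. -/
theorem opial_convergence {d : ℕ}
    (T : EuclideanSpace ℝ (Fin d) → EuclideanSpace ℝ (Fin d))
    (hne : ∀ x y, ‖T x - T y‖ ≤ ‖x - y‖)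
    (har : ∀ x : EuclideanSpace ℝ (Fin d),
      Tendsto (fun r : ℕ => T^[r + 1] x - T^[r] x) atTop (𝓝 0))
    (hfix : ∃ x, T x = x) :
    ∀ x0 : EuclideanSpace ℝ (Fin d),
      ∃ z, T z = z ∧ Tendsto (fun r : ℕ => T^[r] x0) atTop (𝓝 z) := by
  intro x0
  have hT : LipschitzWith 1 T :=
    LipschitzWith.of_dist_le_mul fun x y => by simpa only [dist_eq_norm, NNReal.coe_one, one_mul] using hne x y
  have har_dist : Tendsto (fun r => dist (T^[r + 1] x0) (T^[r] x0)) atTop (𝓝 0) := by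
    simpa only [dist_eq_norm] using (tendsto_zero_iff_norm_tendsto_zero.1 (har x0))
  exact hT.exists_isFixedPt_tendsto_iterate hfix har_dist
end

section
/- Let g : ℝ^d → ℝ be convex and differentiable with L-Lipschitz gradient, h ∈ Γ₀(ℝ^d), and suppose argmin(g+h) ≠ ∅. Then for any η ∈ (0, 2/L) and any x⁰, the proximal gradient iteration x^{r+1} = prox_{ηh}(x^r − η∇g(x^r)) converges to a minimizer of g + h. -/
noncomputable section

/-- Euclidean space `ℝ^d`. -/
abbrev Euc (d : ℕ) := EuclideanSpace ℝ (Fin d)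

/-- `f` is proper: it never takes the value `⊥` and is not identically `+∞`. -/
def ProperF {d : ℕ} (f : Euc d → EReal) : Prop :=
  (∀ x, f x ≠ ⊥) ∧ ∃ x, f x ≠ ⊤

/-- Convexity for extended-real-valued functions on `ℝ^d`. -/
def ConvexF {d : ℕ} (f : Euc d → EReal) : Prop :=
  ∀ x y : Euc d, ∀ t : ℝ, 0 ≤ t → t ≤ 1 →
    f (t • x + (1 - t) • y) ≤ (t : EReal) * f x + ((1 - t : ℝ) : EReal) * f y

/-- `f ∈ Γ₀(ℝ^d)`: proper, convex and lower semicontinuous. -/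
def Gamma0 {d : ℕ} (f : Euc d → EReal) : Prop :=
  ProperF f ∧ ConvexF f ∧ LowerSemicontinuous f

/-- The objective `y ↦ (1/(2λ))‖x - y‖² + f(y)` defining the proximal operator. -/
def proxObj {d : ℕ} (f : Euc d → EReal) (lam : ℝ) (x y : Euc d) : EReal :=
  (((1 / (2 * lam)) * ‖x - y‖ ^ 2 : ℝ) : EReal) + f y

open Filter Topology

/-!
The forward–backward map is the composition of the proximal map of `ηh`, which is firmly
nonexpansive, with the gradient step `x ↦ x - η∇g`, which by the Baillon–Haddad theorem satisfies
`‖Tx - Ty‖² ≤ ‖x - y‖² - η(2/L - η)‖∇g x - ∇g y‖²`. Every minimiser `q` is a fixed point, so the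
iterates are Fejér monotone with respect to `q` and the steps `x^{r+1} - x^r` tend to zero. A
cluster point of the bounded sequence is therefore a fixed point (by lower semicontinuity of `h`),
hence a minimiser, and Fejér monotonicity towards it forces the whole sequence to converge.

The extended-real function `h` is handled through its real values on the effective domain
`{h ≠ ⊤}`, and proximal points through their variational inequality.
-/

open Set
open scoped RealInnerProductSpace

theorem HasDerivAt.neg_le_of_forall_le_add_mul {ψ : ℝ → ℝ} {D c : ℝ} (hψ : HasDerivAt ψ D 0)
    (hle : ∀ t ∈ Ioc (0 : ℝ) 1, ψ 0 ≤ ψ t + t * c) : -c ≤ D := by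
  refine ge_of_tendsto hψ.tendsto_slope_zero_right ?_
  filter_upwards [Ioc_mem_nhdsGT (zero_lt_one' ℝ)] with t ht
  rw [zero_add, smul_eq_mul, le_inv_mul_iff₀ ht.1]
  linarith [hle t ht]

section SmoothConvex

variable {E : Type*} [NormedAddCommGroup E] [InnerProductSpace ℝ E] [CompleteSpace E]
  {g : E → ℝ} {g' : E → E} {L : ℝ}

theorem HasGradientAt.hasDerivAt_comp_add_smul {G x v : E} {t : ℝ}
    (hg : HasGradientAt g G (x + t • v)) :
    HasDerivAt (fun s : ℝ => g (x + s • v)) ⟪G, v⟫ t := by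
  have hline : HasDerivAt (fun s : ℝ => x + s • v) v t := by
    simpa using ((hasDerivAt_id t).smul_const v).const_add x
  simpa [Function.comp_def] using hg.hasFDerivAt.comp_hasDerivAt t hline

theorem ConvexOn.add_inner_le_of_hasGradientAt {s : Set E} (hg : ConvexOn ℝ s g) {G x y : E}
    (hx : x ∈ s) (hy : y ∈ s) (hgx : HasGradientAt g G x) : g x + ⟪G, y - x⟫ ≤ g y := by
  have hderiv : HasDerivAt (fun t : ℝ => -g (x + t • (y - x))) (-⟪G, y - x⟫) 0 :=
    (HasGradientAt.hasDerivAt_comp_add_smul (by simpa using hgx)).neg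
  have := hderiv.neg_le_of_forall_le_add_mul (c := g y - g x) fun t ht => by
    have hseg := hg.2 hx hy (sub_nonneg.2 ht.2) ht.1.le (sub_add_cancel 1 t)
    have hpt : (1 - t) • x + t • y = x + t • (y - x) := by module
    rw [hpt, smul_eq_mul, smul_eq_mul] at hseg
    simp only [zero_smul, add_zero]
    linarith
  linarith

theorem le_add_inner_add_sq_of_lipschitz_gradient (hgrad : ∀ x, HasGradientAt g (g' x) x)
    (hLip : ∀ x y, ‖g' x - g' y‖ ≤ L * ‖x - y‖) (x y : E) :
    g y ≤ g x + ⟪g' x, y - x⟫ + L / 2 * ‖y - x‖ ^ 2 := by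
  set v := y - x
  set χ : ℝ → ℝ := fun t => g (x + t • v) - t * ⟪g' x, v⟫ - L / 2 * ‖v‖ ^ 2 * t ^ 2
  have hχ : ∀ t, HasDerivAt χ (⟪g' (x + t • v), v⟫ - ⟪g' x, v⟫ - L * ‖v‖ ^ 2 * t) t := by
    intro t
    refine (((hgrad (x + t • v)).hasDerivAt_comp_add_smul.sub
      ((hasDerivAt_id' t).mul_const ⟪g' x, v⟫)).sub
      ((hasDerivAt_pow 2 t).const_mul (L / 2 * ‖v‖ ^ 2))).congr_deriv ?_
    norm_num
    ring
  have hχ' : ∀ t ∈ interior (Icc (0 : ℝ) 1),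
      ⟪g' (x + t • v), v⟫ - ⟪g' x, v⟫ - L * ‖v‖ ^ 2 * t ≤ 0 := by
    intro t ht
    rw [interior_Icc] at ht
    have hclose : ‖g' (x + t • v) - g' x‖ ≤ L * (t * ‖v‖) := by
      simpa [norm_smul, abs_of_pos ht.1] using hLip (x + t • v) x
    have := (real_inner_le_norm _ v).trans (mul_le_mul_of_nonneg_right hclose (norm_nonneg v))
    rw [inner_sub_left] at this
    nlinarith
  have hanti : AntitoneOn χ (Icc 0 1) :=
    antitoneOn_of_hasDerivWithinAt_nonpos (convex_Icc 0 1)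
      (fun t _ => (hχ t).continuousAt.continuousWithinAt)
      (fun t _ => (hχ t).hasDerivWithinAt) hχ'
  have := hanti (left_mem_Icc.2 zero_le_one) (right_mem_Icc.2 zero_le_one) zero_le_one
  simp only [χ, v, one_smul, add_sub_cancel, zero_smul, add_zero] at this
  linarith

theorem add_inner_add_sq_norm_gradient_sub_le (hL : 0 < L) (hgconv : ConvexOn ℝ univ g)
    (hgrad : ∀ x, HasGradientAt g (g' x) x) (hLip : ∀ x y, ‖g' x - g' y‖ ≤ L * ‖x - y‖)
    (x y : E) : g x + ⟪g' x, y - x⟫ + ‖g' y - g' x‖ ^ 2 / (2 * L) ≤ g y := by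
  -- compare both bounds at the point reached from `y` by a gradient step of length `1 / L`
  set Δ := g' y - g' x
  set w := y - L⁻¹ • Δ
  have hlow := hgconv.add_inner_le_of_hasGradientAt (mem_univ x) (mem_univ w) (hgrad x)
  have hup := le_add_inner_add_sq_of_lipschitz_gradient hgrad hLip y w
  have hwy : w - y = -(L⁻¹ • Δ) := by simp [w]
  have hwx : w - x = (y - x) - L⁻¹ • Δ := by simp only [w]; abel
  rw [hwx, inner_sub_right, real_inner_smul_right] at hlow
  rw [hwy, inner_neg_right, real_inner_smul_right, norm_neg, norm_smul, Real.norm_eq_abs,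
    abs_of_pos (inv_pos.2 hL)] at hup
  have hΔ : L⁻¹ * ⟪g' y, Δ⟫ - L⁻¹ * ⟪g' x, Δ⟫ = L⁻¹ * ‖Δ‖ ^ 2 := by
    rw [← mul_sub, ← inner_sub_left, real_inner_self_eq_norm_sq]
  have hquad : L⁻¹ * ‖Δ‖ ^ 2 - L / 2 * (L⁻¹ * ‖Δ‖) ^ 2 = ‖Δ‖ ^ 2 / (2 * L) := by
    field_simp
    ring
  linarith

/-- The Baillon–Haddad theorem. -/
theorem sq_norm_gradient_sub_div_le_inner (hL : 0 < L) (hgconv : ConvexOn ℝ univ g)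
    (hgrad : ∀ x, HasGradientAt g (g' x) x) (hLip : ∀ x y, ‖g' x - g' y‖ ≤ L * ‖x - y‖)
    (x y : E) : ‖g' x - g' y‖ ^ 2 / L ≤ ⟪g' x - g' y, x - y⟫ := by
  have hxy := add_inner_add_sq_norm_gradient_sub_le hL hgconv hgrad hLip x y
  have hyx := add_inner_add_sq_norm_gradient_sub_le hL hgconv hgrad hLip y x
  rw [norm_sub_rev] at hxy
  have hinner : ⟪g' x - g' y, x - y⟫ = -⟪g' x, y - x⟫ - ⟪g' y, x - y⟫ := by
    rw [inner_sub_left, ← inner_neg_right, neg_sub]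
  have hhalf : ‖g' x - g' y‖ ^ 2 / L = 2 * (‖g' x - g' y‖ ^ 2 / (2 * L)) := by
    field_simp
  linarith

end SmoothConvex

section ExtendedReal

variable {X : Type*} {φ : X → ℝ} {h : X → EReal}

theorem ne_top_of_coe_add_le_coe_add {q y : X} (hle : (φ q : EReal) + h q ≤ φ y + h y)
    (hy : h y ≠ ⊤) : h q ≠ ⊤ := by
  intro hq
  rw [hq, EReal.coe_add_top] at hle
  exact EReal.add_ne_top (EReal.coe_ne_top _) hy (top_le_iff.1 hle)

theorem forall_coe_add_le_iff (hbot : ∀ y, h y ≠ ⊥) {q : X} (hq : h q ≠ ⊤) :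
    (∀ y, (φ q : EReal) + h q ≤ φ y + h y) ↔
      ∀ y ∈ {y | h y ≠ ⊤}, φ q + (h q).toReal ≤ φ y + (h y).toReal := by
  have hcoe : ∀ {y}, h y ≠ ⊤ → h y = ((h y).toReal : EReal) := fun hy =>
    (EReal.coe_toReal hy (hbot _)).symm
  refine ⟨fun hmin y hy => ?_, fun hmin y => ?_⟩
  · have := hmin y
    rwa [hcoe hq, hcoe hy, ← EReal.coe_add, ← EReal.coe_add, EReal.coe_le_coe_iff] at this
  · by_cases hy : h y = ⊤
    · simp [hy]
    · rw [hcoe hq, hcoe hy, ← EReal.coe_add, ← EReal.coe_add, EReal.coe_le_coe_iff]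
      exact hmin y hy

end ExtendedReal

theorem ConvexF.convexOn_toReal {d : ℕ} {h : Euc d → EReal} (hconv : ConvexF h)
    (hbot : ∀ y, h y ≠ ⊥) : ConvexOn ℝ {y | h y ≠ ⊤} (EReal.toReal ∘ h) := by
  have hseg : ∀ x ∈ {y | h y ≠ ⊤}, ∀ y ∈ {y | h y ≠ ⊤}, ∀ a b : ℝ, 0 ≤ a → 0 ≤ b → a + b = 1 →
      h (a • x + b • y) ≤ ((a * (h x).toReal + b * (h y).toReal : ℝ) : EReal) := by
    intro x hx y hy a b ha hb hab
    obtain rfl : b = 1 - a := by linarith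
    have := hconv x y a ha (by linarith)
    rwa [← EReal.coe_toReal hx (hbot x), ← EReal.coe_toReal hy (hbot y), ← EReal.coe_mul,
      ← EReal.coe_mul, ← EReal.coe_add] at this
  refine ⟨fun x hx y hy a b ha hb hab => ?_, fun x hx y hy a b ha hb hab => ?_⟩
  · exact ne_top_of_le_ne_top (EReal.coe_ne_top _) (hseg x hx y hy a b ha hb hab)
  · have := hseg x hx y hy a b ha hb hab
    rw [← EReal.coe_toReal (ne_top_of_le_ne_top (EReal.coe_ne_top _) this) (hbot _),
      EReal.coe_le_coe_iff] at this
    exact this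

section Prox

variable {E : Type*} [NormedAddCommGroup E] [InnerProductSpace ℝ E]
  {f : E → ℝ} {s : Set E} {η : ℝ}

/-- The variational inequality characterising `p = prox_{ηf}(u)` when `f` is convex on its
effective domain `s`. -/
def IsProxPoint (f : E → ℝ) (s : Set E) (η : ℝ) (u p : E) : Prop :=
  p ∈ s ∧ ∀ w ∈ s, ⟪u - p, w - p⟫ ≤ η * (f w - f p)

theorem sub_le_of_forall_add_le_of_hasDerivAt {φ : E → ℝ} (hf : ConvexOn ℝ s f) {q w : E}
    (hq : q ∈ s) (hw : w ∈ s) {D : ℝ} (hφ : HasDerivAt (fun t : ℝ => φ (q + t • (w - q))) D 0)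
    (hmin : ∀ y ∈ s, φ q + f q ≤ φ y + f y) : f q - f w ≤ D := by
  have := hφ.neg_le_of_forall_le_add_mul (c := f w - f q) fun t ht => by
    have hpt : (1 - t) • q + t • w = q + t • (w - q) := by module
    have hseg := hf.2 hq hw (sub_nonneg.2 ht.2) ht.1.le (sub_add_cancel 1 t)
    rw [hpt, smul_eq_mul, smul_eq_mul] at hseg
    have hmin_t := hmin _ (hpt ▸ hf.1 hq hw (sub_nonneg.2 ht.2) ht.1.le (sub_add_cancel 1 t))
    simp only [zero_smul, add_zero]
    linarith
  linarith

theorem isProxPoint_of_forall_le (hf : ConvexOn ℝ s f) (hη : 0 < η) {u p : E} (hp : p ∈ s)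
    (hmin : ∀ y ∈ s, 1 / (2 * η) * ‖u - p‖ ^ 2 + f p ≤ 1 / (2 * η) * ‖u - y‖ ^ 2 + f y) :
    IsProxPoint f s η u p := by
  refine ⟨hp, fun w hw => ?_⟩
  have hline : HasDerivAt (fun t : ℝ => u - (p + t • (w - p))) (-(w - p)) 0 := by
    simpa using (((hasDerivAt_id' (0 : ℝ)).smul_const (w - p)).const_add p).const_sub u
  have := sub_le_of_forall_add_le_of_hasDerivAt (φ := fun y => 1 / (2 * η) * ‖u - y‖ ^ 2) hf hp hw
    (hline.norm_sq.const_mul _) hmin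
  rw [zero_smul, add_zero, inner_neg_right] at this
  field_simp at this
  linarith

theorem IsProxPoint.sq_norm_sub_le_inner {u v p q : E} (hp : IsProxPoint f s η u p)
    (hq : IsProxPoint f s η v q) : ‖p - q‖ ^ 2 ≤ ⟪u - v, p - q⟫ := by
  have hpq := hp.2 q hq.1
  have hqp := hq.2 p hp.1
  have hsplit : ⟪u - v, p - q⟫ - ‖p - q‖ ^ 2 = -⟪u - p, q - p⟫ - ⟪v - q, p - q⟫ := by
    rw [← real_inner_self_eq_norm_sq, ← inner_sub_left, ← inner_neg_right, neg_sub,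
      ← inner_sub_left]
    congr 1
    abel
  nlinarith

theorem isProxPoint_of_tendsto {h : E → EReal} (hbot : ∀ y, h y ≠ ⊥)
    (hlsc : LowerSemicontinuous h) (hη : 0 < η) {w₀ : E} (hw₀ : h w₀ ≠ ⊤) {u p : ℕ → E}
    {U P : E} (hu : Tendsto u atTop (𝓝 U)) (hp : Tendsto p atTop (𝓝 P))
    (hprox : ∀ k, IsProxPoint (EReal.toReal ∘ h) {y | h y ≠ ⊤} η (u k) (p k)) :
    IsProxPoint (EReal.toReal ∘ h) {y | h y ≠ ⊤} η U P := by
  have hbound : ∀ w ∈ {y | h y ≠ ⊤},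
      h P ≤ (((h w).toReal - ⟪U - P, w - P⟫ / η : ℝ) : EReal) := by
    intro w hw
    have hlim : Tendsto (fun k => (((h w).toReal - ⟪u k - p k, w - p k⟫ / η : ℝ) : EReal))
        atTop (𝓝 (((h w).toReal - ⟪U - P, w - P⟫ / η : ℝ) : EReal)) :=
      continuous_coe_real_ereal.continuousAt.tendsto.comp
        (tendsto_const_nhds.sub (((hu.sub hp).inner (tendsto_const_nhds.sub hp)).div_const η))
    refine hlsc.isClosed_epigraph.mem_of_tendsto (hp.prodMk_nhds hlim) (Eventually.of_forall
      fun k => (EReal.le_coe_toReal (hprox k).1).trans (EReal.coe_le_coe_iff.2 ?_))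
    have := (div_le_iff₀' hη).2 ((hprox k).2 w hw)
    simp only [Function.comp_apply] at this
    linarith
  have hP : h P ≠ ⊤ := ne_top_of_le_ne_top (EReal.coe_ne_top _) (hbound w₀ hw₀)
  refine ⟨hP, fun w hw => ?_⟩
  have := hbound w hw
  rw [← EReal.coe_toReal hP (hbot P), EReal.coe_le_coe_iff, le_sub_comm, div_le_iff₀' hη] at this
  exact this

end Prox

theorem isProxPoint_of_forall_proxObj_le {d : ℕ} {h : Euc d → EReal} (hbot : ∀ y, h y ≠ ⊥)
    (hconv : ConvexF h) {η : ℝ} (hη : 0 < η) {y₀ : Euc d} (hy₀ : h y₀ ≠ ⊤) {u p : Euc d}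
    (hp : ∀ y, proxObj h η u p ≤ proxObj h η u y) :
    IsProxPoint (EReal.toReal ∘ h) {y | h y ≠ ⊤} η u p := by
  set φ := fun y : Euc d => 1 / (2 * η) * ‖u - y‖ ^ 2
  have hpdom : h p ≠ ⊤ := ne_top_of_coe_add_le_coe_add (φ := φ) (hp y₀) hy₀
  exact isProxPoint_of_forall_le (hconv.convexOn_toReal hbot) hη hpdom
    ((forall_coe_add_le_iff (φ := φ) hbot hpdom).1 hp)

theorem tendsto_zero_of_succ_add_le {a b : ℕ → ℝ} (ha : ∀ r, 0 ≤ a r) (hb : ∀ r, 0 ≤ b r)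
    (hab : ∀ r, a (r + 1) + b r ≤ a r) : Tendsto b atTop (𝓝 0) := by
  have htel : ∀ n, ∑ i ∈ Finset.range n, b i + a n ≤ a 0 := by
    intro n
    induction n with
    | zero => simp
    | succ n ih => rw [Finset.sum_range_succ]; linarith [hab n]
  exact (summable_of_sum_range_le hb fun n => by linarith [htel n, ha n]).tendsto_atTop_zero

theorem tendsto_zero_of_tendsto_sq_norm {F : Type*} [SeminormedAddCommGroup F] {l : Filter ℕ}
    {v : ℕ → F} (hv : Tendsto (fun r => ‖v r‖ ^ 2) l (𝓝 0)) : Tendsto v l (𝓝 0) := by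
  rw [tendsto_zero_iff_norm_tendsto_zero]
  simpa using hv.sqrt

theorem tendsto_of_antitone_norm_sub_of_subseq {F : Type*} [SeminormedAddCommGroup F]
    {x : ℕ → F} {z : F} (hanti : Antitone fun r => ‖x r - z‖) {φ : ℕ → ℕ}
    (hsub : Tendsto (x ∘ φ) atTop (𝓝 z)) : Tendsto x atTop (𝓝 z) := by
  rw [Metric.tendsto_atTop] at hsub ⊢
  intro ε hε
  obtain ⟨k, hk⟩ := hsub ε hε
  refine ⟨φ k, fun r hr => ?_⟩
  have hφk := hk k le_rfl
  rw [Function.comp_apply, dist_eq_norm] at hφk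
  rw [dist_eq_norm]
  exact (hanti hr).trans_lt hφk

section ProximalGradient

variable {E : Type*} [NormedAddCommGroup E] [InnerProductSpace ℝ E] [CompleteSpace E]
  {g : E → ℝ} {g' : E → E} {L : ℝ} {f : E → ℝ} {s : Set E} {η : ℝ} {x : ℕ → E}

theorem isProxPoint_sub_smul_of_forall_add_le (hf : ConvexOn ℝ s f) (hη : 0 ≤ η) {G q : E}
    (hq : q ∈ s) (hgq : HasGradientAt g G q) (hmin : ∀ y ∈ s, g q + f q ≤ g y + f y) :
    IsProxPoint f s η (q - η • G) q := by
  refine ⟨hq, fun w hw => ?_⟩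
  have := sub_le_of_forall_add_le_of_hasDerivAt hf hq hw
    (HasGradientAt.hasDerivAt_comp_add_smul (by simpa using hgq)) hmin
  rw [sub_sub_cancel_left, inner_neg_left, real_inner_smul_left]
  nlinarith

theorem IsProxPoint.forall_add_le (hg : ConvexOn ℝ univ g) (hη : 0 < η) {G q : E}
    (hgq : HasGradientAt g G q) (hq : IsProxPoint f s η (q - η • G) q) :
    ∀ y ∈ s, g q + f q ≤ g y + f y := by
  intro y hy
  have hlin := hg.add_inner_le_of_hasGradientAt (mem_univ q) (mem_univ y) hgq
  have hprox := hq.2 y hy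
  rw [sub_sub_cancel_left, inner_neg_left, real_inner_smul_left, neg_le, ← mul_neg] at hprox
  linarith [le_of_mul_le_mul_left hprox hη]

theorem sq_norm_sub_smul_gradient_le (hL : 0 < L) (hgconv : ConvexOn ℝ univ g)
    (hgrad : ∀ x, HasGradientAt g (g' x) x) (hLip : ∀ x y, ‖g' x - g' y‖ ≤ L * ‖x - y‖)
    (hη : 0 ≤ η) (x y : E) :
    ‖x - η • g' x - (y - η • g' y)‖ ^ 2 ≤ ‖x - y‖ ^ 2 - η * (2 / L - η) * ‖g' x - g' y‖ ^ 2 := by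
  have hco := mul_le_mul_of_nonneg_left
    (sq_norm_gradient_sub_div_le_inner hL hgconv hgrad hLip x y) hη
  have hsplit : x - η • g' x - (y - η • g' y) = (x - y) - η • (g' x - g' y) := by module
  rw [hsplit, norm_sub_sq_real, real_inner_smul_right, norm_smul, Real.norm_eq_abs,
    abs_of_nonneg hη, real_inner_comm]
  have hring : η * (2 / L - η) * ‖g' x - g' y‖ ^ 2
      = 2 * (η * (‖g' x - g' y‖ ^ 2 / L)) - (η * ‖g' x - g' y‖) ^ 2 := by ring
  linarith

theorem sq_norm_proxGrad_step_sub_le (hL : 0 < L) (hgconv : ConvexOn ℝ univ g)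
    (hgrad : ∀ x, HasGradientAt g (g' x) x) (hLip : ∀ x y, ‖g' x - g' y‖ ≤ L * ‖x - y‖)
    (hf : ConvexOn ℝ s f) (hη : 0 ≤ η) {q : E} (hq : q ∈ s)
    (hmin : ∀ y ∈ s, g q + f q ≤ g y + f y) {x p : E} (hp : IsProxPoint f s η (x - η • g' x) p) :
    ‖p - q‖ ^ 2 + ‖p - x + η • (g' x - g' q)‖ ^ 2 + η * (2 / L - η) * ‖g' x - g' q‖ ^ 2 ≤
      ‖x - q‖ ^ 2 := by
  -- `q` is the prox point of its own gradient step, and the prox is firmly nonexpansive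
  have hfirm := hp.sq_norm_sub_le_inner
    (isProxPoint_sub_smul_of_forall_add_le hf hη hq (hgrad q) hmin)
  have hforward := sq_norm_sub_smul_gradient_le hL hgconv hgrad hLip hη x q
  have hres : p - x + η • (g' x - g' q) = (p - q) - (x - η • g' x - (q - η • g' q)) := by module
  rw [hres, norm_sub_sq_real (p - q), real_inner_comm]
  linarith

theorem antitone_norm_proxGrad_sub (hL : 0 < L) (hgconv : ConvexOn ℝ univ g)
    (hgrad : ∀ x, HasGradientAt g (g' x) x) (hLip : ∀ x y, ‖g' x - g' y‖ ≤ L * ‖x - y‖)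
    (hf : ConvexOn ℝ s f) (hη : 0 ≤ η) (hη2 : η ≤ 2 / L)
    (hx : ∀ r, IsProxPoint f s η (x r - η • g' (x r)) (x (r + 1))) {q : E} (hq : q ∈ s)
    (hmin : ∀ y ∈ s, g q + f q ≤ g y + f y) : Antitone fun r => ‖x r - q‖ := by
  refine antitone_nat_of_succ_le fun r => ?_
  have hstep := sq_norm_proxGrad_step_sub_le hL hgconv hgrad hLip hf hη hq hmin (hx r)
  have : 0 ≤ η * (2 / L - η) * ‖g' (x r) - g' q‖ ^ 2 := by
    have := sub_nonneg.2 hη2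
    positivity
  exact (pow_le_pow_iff_left₀ (norm_nonneg _) (norm_nonneg _) two_ne_zero).1
    (by nlinarith [sq_nonneg ‖x (r + 1) - x r + η • (g' (x r) - g' q)‖])

theorem tendsto_proxGrad_succ_sub (hL : 0 < L) (hgconv : ConvexOn ℝ univ g)
    (hgrad : ∀ x, HasGradientAt g (g' x) x) (hLip : ∀ x y, ‖g' x - g' y‖ ≤ L * ‖x - y‖)
    (hf : ConvexOn ℝ s f) (hη : 0 < η) (hη2 : η < 2 / L)
    (hx : ∀ r, IsProxPoint f s η (x r - η • g' (x r)) (x (r + 1))) {q : E} (hq : q ∈ s)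
    (hmin : ∀ y ∈ s, g q + f q ≤ g y + f y) :
    Tendsto (fun r => x (r + 1) - x r) atTop (𝓝 0) := by
  set c := η * (2 / L - η)
  have hc : 0 < c := mul_pos hη (sub_pos.2 hη2)
  have hstep := fun r => sq_norm_proxGrad_step_sub_le hL hgconv hgrad hLip hf hη.le hq hmin (hx r)
  have hgrad0 : Tendsto (fun r => g' (x r) - g' q) atTop (𝓝 0) := by
    refine tendsto_zero_of_tendsto_sq_norm ?_
    have := tendsto_zero_of_succ_add_le (a := fun r => ‖x r - q‖ ^ 2)
      (b := fun r => c * ‖g' (x r) - g' q‖ ^ 2) (fun r => by positivity) (fun r => by positivity)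
      fun r => by nlinarith [hstep r, sq_nonneg ‖x (r + 1) - x r + η • (g' (x r) - g' q)‖]
    simpa [hc.ne'] using this.const_mul c⁻¹
  have hres : Tendsto (fun r => x (r + 1) - x r + η • (g' (x r) - g' q)) atTop (𝓝 0) :=
    tendsto_zero_of_tendsto_sq_norm <| tendsto_zero_of_succ_add_le (a := fun r => ‖x r - q‖ ^ 2)
      (fun r => by positivity) (fun r => by positivity)
      fun r => by nlinarith [hstep r, mul_nonneg hc.le (sq_nonneg ‖g' (x r) - g' q‖)]
  simpa using hres.sub (hgrad0.const_smul η)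

theorem proxGrad_isMin_of_tendsto_subseq {h : E → EReal} (hbot : ∀ y, h y ≠ ⊥)
    (hlsc : LowerSemicontinuous h) (hf : ConvexOn ℝ {y | h y ≠ ⊤} (EReal.toReal ∘ h))
    (hL : 0 < L) (hgconv : ConvexOn ℝ univ g)
    (hgrad : ∀ x, HasGradientAt g (g' x) x) (hLip : ∀ x y, ‖g' x - g' y‖ ≤ L * ‖x - y‖)
    (hη : 0 < η) (hη2 : η < 2 / L)
    (hx : ∀ r, IsProxPoint (EReal.toReal ∘ h) {y | h y ≠ ⊤} η (x r - η • g' (x r)) (x (r + 1)))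
    {q : E} (hq : h q ≠ ⊤) (hmin : ∀ y ∈ {y | h y ≠ ⊤}, g q + (h q).toReal ≤ g y + (h y).toReal)
    {φ : ℕ → ℕ} (hφ : Tendsto φ atTop atTop) {z : E} (hz : Tendsto (x ∘ φ) atTop (𝓝 z)) :
    h z ≠ ⊤ ∧ ∀ y ∈ {y | h y ≠ ⊤}, g z + (h z).toReal ≤ g y + (h y).toReal := by
  have hstep := (tendsto_proxGrad_succ_sub hL hgconv hgrad hLip hf hη hη2 hx hq hmin).comp hφ
  have hg'cont : Continuous g' :=
    (LipschitzWith.of_dist_le_mul (K := ⟨L, hL.le⟩) fun a b => by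
      rw [dist_eq_norm, dist_eq_norm]; exact hLip a b).continuous
  have hu : Tendsto (fun k => x (φ k) - η • g' (x (φ k))) atTop (𝓝 (z - η • g' z)) :=
    hz.sub (((hg'cont.tendsto z).comp hz).const_smul η)
  have hp : Tendsto (fun k => x (φ k + 1)) atTop (𝓝 z) := by
    simpa using hz.add hstep
  have hzprox := isProxPoint_of_tendsto hbot hlsc hη hq hu hp fun k => hx (φ k)
  exact ⟨hzprox.1, hzprox.forall_add_le hgconv hη (hgrad z)⟩

end ProximalGradient

theorem proximal_gradient_converges_general {d : ℕ}
    (g : Euc d → ℝ) (g' : Euc d → Euc d) (L : ℝ)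
    (hgconv : ConvexOn ℝ Set.univ g)
    (hgrad : ∀ x, HasGradientAt g (g' x) x)
    (hLip : ∀ x y, ‖g' x - g' y‖ ≤ L * ‖x - y‖)
    (h : Euc d → EReal) (hh : Gamma0 h)
    (hmin : ∃ m : Euc d, ∀ y, ((g m : ℝ) : EReal) + h m ≤ ((g y : ℝ) : EReal) + h y)
    (eta : ℝ) (heta0 : 0 < eta) (heta2 : eta < 2 / L)
    (x : ℕ → Euc d)
    (hiter : ∀ r : ℕ, ∀ y : Euc d,
      proxObj h eta (x r - eta • g' (x r)) (x (r + 1)) ≤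
        proxObj h eta (x r - eta • g' (x r)) y) :
    ∃ m : Euc d, (∀ y, ((g m : ℝ) : EReal) + h m ≤ ((g y : ℝ) : EReal) + h y) ∧
      Tendsto x atTop (𝓝 m) := by
  obtain ⟨m, hm⟩ := hmin
  obtain ⟨⟨hbot, x₀, hx₀⟩, hconv, hlsc⟩ := hh
  have hL : 0 < L := by
    by_contra! hL
    linarith [div_nonpos_of_nonneg_of_nonpos zero_le_two hL]
  have hf := hconv.convexOn_toReal hbot
  have hx r := isProxPoint_of_forall_proxObj_le hbot hconv heta0 hx₀ (hiter r)
  have hmdom : h m ≠ ⊤ := ne_top_of_coe_add_le_coe_add (hm x₀) hx₀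
  have hmin_m := (forall_coe_add_le_iff hbot hmdom).1 hm
  have hbdd r : x r ∈ Metric.closedBall m ‖x 0 - m‖ := by
    rw [Metric.mem_closedBall, dist_eq_norm]
    exact antitone_norm_proxGrad_sub hL hgconv hgrad hLip hf heta0.le heta2.le hx hmdom hmin_m
      (Nat.zero_le r)
  obtain ⟨z, -, φ, hφ, hz⟩ := tendsto_subseq_of_bounded Metric.isBounded_closedBall hbdd
  obtain ⟨hzdom, hmin_z⟩ := proxGrad_isMin_of_tendsto_subseq hbot hlsc hf hL hgconv hgrad hLip
    heta0 heta2 hx hmdom hmin_m hφ.tendsto_atTop hz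
  exact ⟨z, (forall_coe_add_le_iff hbot hzdom).2 hmin_z, tendsto_of_antitone_norm_sub_of_subseq
    (antitone_norm_proxGrad_sub hL hgconv hgrad hLip hf heta0.le heta2.le hx hzdom hmin_z) hz⟩

/-- convergence of the proximal gradient (forward-backward splitting)
algorithm for `g + h`, with `g` convex and `L`-Lipschitz differentiable,
`h ∈ Γ₀(ℝ^d)` and step size `η ∈ (0, 2/L)`. -/
theorem proximal_gradient_converges {d : ℕ}
    (g : Euc d → ℝ) (g' : Euc d → Euc d) (L : ℝ) (hL0 : 0 ≤ L)
    (hgconv : ConvexOn ℝ Set.univ g)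
    (hgrad : ∀ x, HasGradientAt g (g' x) x)
    (hLip : ∀ x y, ‖g' x - g' y‖ ≤ L * ‖x - y‖)
    (h : Euc d → EReal) (hh : Gamma0 h)
    (hmin : ∃ m : Euc d, ∀ y, ((g m : ℝ) : EReal) + h m ≤ ((g y : ℝ) : EReal) + h y)
    (eta : ℝ) (heta0 : 0 < eta) (heta2 : eta < 2 / L)
    (x : ℕ → Euc d)
    (hiter : ∀ r : ℕ, ∀ y : Euc d,
      proxObj h eta (x r - eta • g' (x r)) (x (r + 1)) ≤
        proxObj h eta (x r - eta • g' (x r)) y) :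
    ∃ m : Euc d, (∀ y, ((g m : ℝ) : EReal) + h m ≤ ((g y : ℝ) : EReal) + h y) ∧
      Tendsto x atTop (𝓝 m) :=
  proximal_gradient_converges_general g g' L hgconv hgrad hLip h hh hmin eta heta0 heta2 x hiter
end
end
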